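/- arXiv:2307.04594 — 2 statements merged into one kernel-verified Lean document; each statement's English description precedes it below -/
import Mathlib

section
/- Let G be a connected graph with a minimum-size cluster vertex deletion set of size t (i.e., deleting t vertices leaves a disjoint union of cliques). Then c(G) ≤ ⌈t/2⌉ + 1. The same bound holds when t is the deletion-to-stars number (deleting t vertices leaves a disjoint union of stars). -/
open SimpleGraph

variable {V : Type*}

/-- A (positional) strategy for `k` cops on the graph `G`: an initial placement and a
move function; each cop may stay or move to an adjacent vertex. -/
structure CopStrat (G : SimpleGraph V) (k : ℕ) where
  init : Fin k → V
  move : (Fin k → V) → V → Fin k → V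
  valid : ∀ c r i, move c r i = c i ∨ G.Adj (c i) (move c r i)

/-- A strategy for the robber: an initial placement (knowing the cops' placement) and a
move function; the robber may stay or move to an adjacent vertex. -/
structure RobStrat (G : SimpleGraph V) (k : ℕ) where
  init : (Fin k → V) → V
  move : (Fin k → V) → V → V
  valid : ∀ c r, move c r = r ∨ G.Adj r (move c r)

/-- The play determined by initial placements and move functions: position of the cops and
of the robber after `n` full rounds (cops move first in each round). -/
def gplay {k : ℕ} (ci : Fin k → V) (cm : (Fin k → V) → V → Fin k → V)
    (ri : (Fin k → V) → V) (rm : (Fin k → V) → V → V) : ℕ → (Fin k → V) × V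
  | 0 => (ci, ri ci)
  | n + 1 =>
    let p := gplay ci cm ri rm n
    let c' := cm p.1 p.2
    (c', rm c' p.2)

/-- The robber is caught: at some moment (either on a cops' move, or because the
positions already coincide) a cop occupies the robber's vertex. -/
def gCaught {k : ℕ} (ci : Fin k → V) (cm : (Fin k → V) → V → Fin k → V)
    (ri : (Fin k → V) → V) (rm : (Fin k → V) → V → V) : Prop :=
  ∃ n, ∃ i,
    (gplay ci cm ri rm n).1 i = (gplay ci cm ri rm n).2 ∨
      cm (gplay ci cm ri rm n).1 (gplay ci cm ri rm n).2 i = (gplay ci cm ri rm n).2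

/-- `k` cops have a winning strategy on `G`. -/
def CopsWin (G : SimpleGraph V) (k : ℕ) : Prop :=
  ∃ CS : CopStrat G k, ∀ RS : RobStrat G k,
    gCaught CS.init CS.move RS.init RS.move

/-- The cop number of `G`. -/
noncomputable def copNumber (G : SimpleGraph V) : ℕ := sInf {k | CopsWin G k}


/-- A graph is a disjoint union of cliques. -/
def IsClusterGraph {W : Type*} (H : SimpleGraph W) : Prop :=
  ∀ ⦃x y z : W⦄, H.Adj x y → H.Adj y z → x = z ∨ H.Adj x z

/-- A graph is a disjoint union of stars: every edge has an endpoint whose unique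
neighbour is the other endpoint. -/
def IsStarForest {W : Type*} (H : SimpleGraph W) : Prop :=
  ∀ ⦃x y : W⦄, H.Adj x y → (∀ z, H.Adj x z → z = y) ∨ (∀ z, H.Adj y z → z = x)

/-- The cluster vertex deletion number of `G`. -/
noncomputable def cvdNumber {V : Type*} (G : SimpleGraph V) : ℕ :=
  sInf {t | ∃ U : Finset V, IsClusterGraph (G.induce ((↑U : Set V)ᶜ)) ∧ U.card = t}

/-- The deletion-to-stars number of `G`. -/
noncomputable def dtsNumber {V : Type*} (G : SimpleGraph V) : ℕ :=
  sInf {t | ∃ U : Finset V, IsStarForest (G.induce ((↑U : Set V)ᶜ)) ∧ U.card = t}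

/-
Split the `t` deleted vertices into `⌈t/2⌉` pairs and give each pair a cop guarding a shortest
path `P` between its two vertices `a` and `b`. The index `min (d(a, r)) |P|` of the robber's
shadow on `P` changes by at most one per robber move, so the cop eventually stands on the shadow
at all times; as the shadow of a vertex of `P` is that vertex itself, the robber can never again
step onto `P`. He is thus confined to one component of `G - U`, a clique or a star, which has a
dominating vertex: one more cop walks to that vertex and catches him.
-/

open Filter

section Game

variable (G : SimpleGraph V)

def IsLazyWalk (r : ℕ → V) : Prop :=
  ∀ n, r (n + 1) = r n ∨ G.Adj (r n) (r (n + 1))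

/-- `f x r` is the next position of a cop at `x` when the robber is at `r`. -/
def IsCopRule (f : V → V → V) : Prop :=
  ∀ x r, f x r = x ∨ G.Adj x (f x r)

variable {G}

theorem copsWin_of_forall_catch {k : ℕ} (c₀ : Fin k → V) (f : Fin k → V → V → V)
    (hf : ∀ i, IsCopRule G (f i))
    (hcatch : ∀ (x : Fin k → ℕ → V) (r : ℕ → V), IsLazyWalk G r → (∀ i, x i 0 = c₀ i) →
      (∀ i n, x i (n + 1) = f i (x i n) (r n)) → ∃ n i, x i n = r n ∨ x i (n + 1) = r n) :
    CopsWin G k := by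
  refine ⟨⟨c₀, fun c r i => f i (c i) r, fun c r i => hf i (c i) r⟩, fun RS => ?_⟩
  exact hcatch (fun i n => (gplay _ _ RS.init RS.move n).1 i) (fun n => (gplay _ _ _ _ n).2)
    (fun n => RS.valid _ _) (fun _ => rfl) (fun _ _ => rfl)

end Game

theorem not_eventually_succ_lt (f : ℕ → ℕ) : ¬ ∀ᶠ n in atTop, f (n + 1) < f n := by
  rintro h
  obtain ⟨N, hN⟩ := eventually_atTop.1 h
  obtain ⟨n, hn⟩ := WellFounded.not_rel_apply_succ (r := (· < ·)) fun k => f (N + k)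
  exact hn (hN (N + n) (Nat.le_add_right N n))

def stepIndexToward (j s : ℕ) : ℕ :=
  if j < s then j + 1 else if s < j then j - 1 else j

theorem stepIndexToward_le {j s m : ℕ} (hj : j ≤ m) (hs : s ≤ m) : stepIndexToward j s ≤ m := by
  unfold stepIndexToward; split_ifs <;> omega

theorem eventually_stepIndexToward_eq {m : ℕ} {s J : ℕ → ℕ} (hsm : ∀ n, s n ≤ m)
    (hs : ∀ n, s (n + 1) ≤ s n + 1 ∧ s n ≤ s (n + 1) + 1)
    (hJ : ∀ n, J (n + 1) = stepIndexToward (J n) (s n)) :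
    ∀ᶠ n in atTop, J (n + 1) = s n := by
  have hnear : ∀ n, J n ≤ s n + 1 → s n ≤ J n + 1 →
      J (n + 1) = s n ∧ J (n + 1) ≤ s (n + 1) + 1 ∧ s (n + 1) ≤ J (n + 1) + 1 := by
    intro n h₁ h₂
    have := hs n
    rw [hJ, stepIndexToward]; split_ifs <;> omega
  obtain ⟨N, hN⟩ : ∃ N, J N ≤ s N + 1 ∧ s N ≤ J N + 1 := by
    by_contra! hfar
    -- far below the target the index climbs towards `m`, far above it descends towards `0`
    refine not_eventually_succ_lt (fun n => if J n < s n then m - J n else J n)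
      (Eventually.of_forall fun n => ?_)
    have := hfar n; have := hfar (n + 1); have := hs n; have := hsm n; have := hJ n
    simp only [stepIndexToward] at *
    split_ifs at * <;> omega
  filter_upwards [eventually_ge_atTop N] with n hn
  suffices h : J n ≤ s n + 1 ∧ s n ≤ J n + 1 from (hnear n h.1 h.2).1
  induction n, hn using Nat.le_induction with
  | base => exact hN
  | succ n _ ih => exact (hnear n ih.1 ih.2).2

theorem SimpleGraph.Walk.dist_getVert_of_length_eq_dist {G : SimpleGraph V} {a b : V}
    {P : G.Walk a b} (hP : P.length = G.dist a b) (j : ℕ) :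
    G.dist a (P.getVert j) = min j P.length := by
  have h₁ : G.dist a (P.getVert j) ≤ min j P.length := by simpa using dist_le (P.take j)
  have h₂ : G.dist (P.getVert j) b ≤ P.length - j := by simpa using dist_le (P.drop j)
  have h₃ := (P.take j).reachable.dist_triangle_left b
  omega

section Guard

variable {G : SimpleGraph V} {a b : V} (P : G.Walk a b)

noncomputable def shadowIndex (r : V) : ℕ := min (G.dist a r) P.length

open scoped Classical in
/-- On a shortest walk `P` from `a`, the vertex `x` is `P.getVert j` exactly for `j = d(a, x)`. -/
noncomputable def guardMove (x r : V) : V :=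
  if P.getVert (G.dist a x) = x then P.getVert (stepIndexToward (G.dist a x) (shadowIndex P r))
  else x

variable {P}

theorem shadowIndex_le (r : V) : shadowIndex P r ≤ P.length := min_le_right _ _

theorem getVert_dist_getVert (hP : P.length = G.dist a b) (j : ℕ) :
    P.getVert (G.dist a (P.getVert j)) = P.getVert j := by
  rw [P.dist_getVert_of_length_eq_dist hP]
  rcases le_total j P.length with h | h
  · rw [min_eq_left h]
  · rw [min_eq_right h, P.getVert_length, P.getVert_of_length_le h]

theorem dist_le_length_of_getVert_dist_eq (hP : P.length = G.dist a b) {x : V}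
    (hx : P.getVert (G.dist a x) = x) : G.dist a x ≤ P.length := by
  have := P.dist_getVert_of_length_eq_dist hP (G.dist a x)
  rw [hx] at this
  omega

theorem getVert_shadowIndex (hP : P.length = G.dist a b) {v : V} (hv : v ∈ P.support) :
    P.getVert (shadowIndex P v) = v := by
  obtain ⟨j, rfl, hj⟩ := Walk.mem_support_iff_exists_getVert.1 hv
  rw [shadowIndex, P.dist_getVert_of_length_eq_dist hP, min_eq_left hj, min_eq_left hj]

theorem isCopRule_guardMove (hP : P.length = G.dist a b) : IsCopRule G (guardMove P) := by
  intro x r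
  unfold guardMove
  split_ifs with hx
  · have hj := dist_le_length_of_getVert_dist_eq hP hx
    have hs := shadowIndex_le (P := P) r
    generalize G.dist a x = j at hx hj
    subst hx
    unfold stepIndexToward
    split_ifs with h₁ h₂
    · exact Or.inr (P.adj_getVert_succ (by omega))
    · have := P.adj_getVert_succ (i := j - 1) (by omega)
      rw [Nat.sub_add_cancel (by omega)] at this
      exact Or.inr this.symm
    · exact Or.inl rfl
  · exact Or.inl rfl

theorem eventually_guardMove_eq_getVert (hP : P.length = G.dist a b) {x r : ℕ → V}
    (hr : IsLazyWalk G r) (hx₀ : x 0 = a) (hx : ∀ n, x (n + 1) = guardMove P (x n) (r n)) :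
    ∀ᶠ n in atTop, x (n + 1) = P.getVert (shadowIndex P (r n)) := by
  have hon : ∀ n, P.getVert (G.dist a (x n)) = x n := by
    intro n
    induction n with
    | zero => simp [hx₀]
    | succ n ih => rw [hx n, guardMove, if_pos ih, getVert_dist_getVert hP]
  have hJ : ∀ n, G.dist a (x (n + 1)) =
      stepIndexToward (G.dist a (x n)) (shadowIndex P (r n)) := by
    intro n
    rw [hx n, guardMove, if_pos (hon n), P.dist_getVert_of_length_eq_dist hP, min_eq_left
      (stepIndexToward_le (dist_le_length_of_getVert_dist_eq hP (hon n)) (shadowIndex_le _))]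
  have hs : ∀ n, shadowIndex P (r (n + 1)) ≤ shadowIndex P (r n) + 1 ∧
      shadowIndex P (r n) ≤ shadowIndex P (r (n + 1)) + 1 := by
    intro n
    unfold shadowIndex
    rcases hr n with h | h
    · rw [h]; omega
    · rcases h.diff_dist_adj (u := a) with h' | h' | h' <;> omega
  filter_upwards [eventually_stepIndexToward_eq (J := fun n => G.dist a (x n))
    (fun n => shadowIndex_le _) hs hJ] with n hn
  rw [← hon, hn]

theorem eventually_guardMove_catches (hP : P.length = G.dist a b) {x r : ℕ → V}
    (hr : IsLazyWalk G r) (hx₀ : x 0 = a) (hx : ∀ n, x (n + 1) = guardMove P (x n) (r n)) :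
    ∀ᶠ n in atTop, r n ∈ P.support → x (n + 1) = r n := by
  filter_upwards [eventually_guardMove_eq_getVert hP hr hx₀ hx] with n hn hmem
  rw [hn, getVert_shadowIndex hP hmem]

end Guard

section Chase

variable (G : SimpleGraph V)

open scoped Classical in
noncomputable def stepToward (z x : V) : V :=
  if h : ∃ y, G.Adj x y ∧ G.dist y z < G.dist x z then h.choose else x

open scoped Classical in
noncomputable def chaseMove (ρ : V → V) (x r : V) : V :=
  if G.Adj x r then r else stepToward G (ρ r) x

variable {G}

theorem stepToward_eq_or_adj (z x : V) : stepToward G z x = x ∨ G.Adj x (stepToward G z x) := by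
  unfold stepToward
  split_ifs with h
  · exact Or.inr h.choose_spec.1
  · exact Or.inl rfl

theorem dist_stepToward_lt (hG : G.Connected) {z x : V} (h : x ≠ z) :
    G.dist (stepToward G z x) z < G.dist x z := by
  have hex : ∃ y, G.Adj x y ∧ G.dist y z < G.dist x z := by
    obtain ⟨p, hp⟩ := hG.exists_walk_length_eq_dist x z
    cases p with
    | nil => exact absurd rfl h
    | cons hadj q =>
      rw [Walk.length_cons] at hp
      exact ⟨_, hadj, (dist_le q).trans_lt (by omega)⟩
  rw [stepToward, dif_pos hex]
  exact hex.choose_spec.2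

theorem isCopRule_chaseMove (ρ : V → V) : IsCopRule G (chaseMove G ρ) := by
  intro x r
  unfold chaseMove
  split_ifs with h
  · exact Or.inr h
  · exact stepToward_eq_or_adj _ _

/-- A robber eventually confined to `S` stays in one component of `G[S]`, so the chaser heads
for a fixed vertex dominating him. -/
theorem chaseMove_catches (hG : G.Connected) {S : Set V} {ρ : V → V}
    (hρadj : ∀ y ∈ S, ∀ y' ∈ S, G.Adj y y' → ρ y = ρ y')
    (hρdom : ∀ y ∈ S, ρ y = y ∨ G.Adj (ρ y) y) {x r : ℕ → V} (hr : IsLazyWalk G r)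
    (hrS : ∀ᶠ n in atTop, r n ∈ S) (hx : ∀ n, x (n + 1) = chaseMove G ρ (x n) (r n)) :
    ∃ n, x n = r n ∨ x (n + 1) = r n := by
  by_contra! hfree
  obtain ⟨N, hN⟩ := eventually_atTop.1 hrS
  have hρ : ∀ n ≥ N, ρ (r n) = ρ (r N) := by
    intro n hn
    induction n, hn using Nat.le_induction with
    | base => rfl
    | succ n hn ih =>
      rcases hr n with h | h
      · rw [h, ih]
      · rw [← hρadj _ (hN n hn) _ (hN (n + 1) (by omega)) h, ih]
  have hnadj : ∀ n, ¬ G.Adj (x n) (r n) := fun n h =>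
    (hfree n).2 (by rw [hx, chaseMove, if_pos h])
  refine not_eventually_succ_lt (fun n => G.dist (x n) (ρ (r N))) ?_
  filter_upwards [eventually_ge_atTop N] with n hn
  have hne : x n ≠ ρ (r n) := by
    rintro h
    rcases hρdom _ (hN n hn) with h' | h'
    · exact (hfree n).1 (h.trans h')
    · exact hnadj n (h ▸ h')
  rw [hx n, chaseMove, if_neg (hnadj n), hρ n hn]
  exact dist_stepToward_lt hG (hρ n hn ▸ hne)

end Chase

section Dominated

variable {G : SimpleGraph V}

def EveryComponentDominated (G : SimpleGraph V) : Prop :=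
  ∀ c : G.ConnectedComponent, ∃ z, ∀ y, G.connectedComponentMk y = c → z = y ∨ G.Adj z y

theorem everyComponentDominated_of_forall_exists
    (h : ∀ x, ∃ z, G.Reachable x z ∧ ∀ a b, G.Adj z a → G.Adj a b → z = b ∨ G.Adj z b) :
    EveryComponentDominated G := by
  refine ConnectedComponent.ind fun x => ?_
  obtain ⟨z, hxz, hz⟩ := h x
  refine ⟨z, fun y hy => ?_⟩
  have hzy := (reachable_iff_reflTransGen z y).1
    (hxz.symm.trans (ConnectedComponent.exact hy).symm)
  clear hy
  induction hzy with
  | refl => exact Or.inl rfl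
  | tail _ hab ih =>
    rcases ih with rfl | hza
    · exact Or.inr hab
    · exact hz _ _ hza hab

theorem IsClusterGraph.everyComponentDominated (h : IsClusterGraph G) :
    EveryComponentDominated G :=
  everyComponentDominated_of_forall_exists fun x => ⟨x, .rfl, fun _ _ hxa hab => h hxa hab⟩

theorem IsStarForest.everyComponentDominated (h : IsStarForest G) :
    EveryComponentDominated G := by
  refine everyComponentDominated_of_forall_exists fun x => ?_
  have hcenter : ∀ z ℓ, G.Adj z ℓ → (∀ w, G.Adj ℓ w → w = z) →
      ∀ a b, G.Adj z a → G.Adj a b → z = b ∨ G.Adj z b := by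
    intro z ℓ hzℓ hℓ a b hza hab
    left
    rcases h hza with hz | ha
    · obtain rfl := hz ℓ hzℓ
      exact (hℓ b hab).symm
    · exact (ha b hab).symm
  by_cases hx : ∃ y, G.Adj x y
  · obtain ⟨y, hxy⟩ := hx
    rcases h hxy with hx | hy
    · exact ⟨y, hxy.reachable, hcenter y x hxy.symm hx⟩
    · exact ⟨x, .rfl, hcenter x y hxy hy⟩
  · push Not at hx
    exact ⟨x, .rfl, fun a _ hxa => absurd hxa (hx a)⟩

theorem EveryComponentDominated.exists_center {S : Set V}
    (h : EveryComponentDominated (G.induce S)) :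
    ∃ ρ : V → V, (∀ y ∈ S, ∀ y' ∈ S, G.Adj y y' → ρ y = ρ y') ∧
      ∀ y ∈ S, ρ y = y ∨ G.Adj (ρ y) y := by
  classical
  choose z hz using h
  refine ⟨fun y => if hy : y ∈ S then z ((G.induce S).connectedComponentMk ⟨y, hy⟩) else y,
    fun y hy y' hy' hadj => ?_, fun y hy => ?_⟩
  · simp only [dif_pos hy, dif_pos hy']
    rw [ConnectedComponent.connectedComponentMk_eq_of_adj (G := G.induce S) (v := ⟨y, hy⟩)
      (w := ⟨y', hy'⟩) (by simpa using hadj)]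
  · simpa [dif_pos hy, Subtype.ext_iff] using hz _ ⟨y, hy⟩ rfl

end Dominated

theorem Finset.exists_pair_cover (U : Finset V) :
    ∃ a b : Fin ((U.card + 1) / 2) → V, ∀ u ∈ U, ∃ i, a i = u ∨ b i = u := by
  let e := U.equivFin.symm
  refine ⟨fun i => e ⟨2 * i, by omega⟩, fun i => e ⟨min (2 * i + 1) (U.card - 1), by omega⟩,
    fun u hu => ?_⟩
  obtain ⟨j, hj⟩ := e.surjective ⟨u, hu⟩
  refine ⟨⟨j / 2, by omega⟩, ?_⟩
  rcases Nat.even_or_odd' (j : ℕ) with ⟨k, hk | hk⟩ <;> [left; right] <;>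
  · convert congrArg Subtype.val hj using 3
    ext
    simp only
    omega

theorem copsWin_of_everyComponentDominated {G : SimpleGraph V} (hG : G.Connected) (U : Finset V)
    (hU : EveryComponentDominated (G.induce (↑U : Set V)ᶜ)) :
    CopsWin G ((U.card + 1) / 2 + 1) := by
  obtain ⟨a, b, hab⟩ := U.exists_pair_cover
  choose P hP using fun i => hG.exists_walk_length_eq_dist (a i) (b i)
  obtain ⟨ρ, hρadj, hρdom⟩ := hU.exists_center
  refine copsWin_of_forall_catch (Fin.lastCases hG.nonempty.some a)
    (Fin.lastCases (chaseMove G ρ) fun i => guardMove (P i))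
    (Fin.lastCases (by simpa using isCopRule_chaseMove ρ)
      fun i => by simpa using isCopRule_guardMove (hP i)) fun x r hr hx₀ hx => ?_
  by_contra! hfree
  have hguard : ∀ᶠ n in atTop, ∀ i, r n ∈ (P i).support → x i.castSucc (n + 1) = r n :=
    eventually_all.2 fun i => eventually_guardMove_catches (hP i) hr
      (by simpa using hx₀ i.castSucc) fun n => by simpa using hx i.castSucc n
  have hoff : ∀ᶠ n in atTop, r n ∈ (↑U : Set V)ᶜ := by
    filter_upwards [hguard] with n hn hrU
    obtain ⟨i, hi⟩ := hab _ hrU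
    exact (hfree n i.castSucc).2 (hn i (by rcases hi with hi | hi <;> simp [← hi]))
  obtain ⟨n, hn⟩ := chaseMove_catches hG hρadj hρdom hr hoff
    fun n => by simpa using hx (Fin.last _) n
  exact hn.elim (hfree n _).1 (hfree n _).2

theorem copNumber_le_of_deletion [Fintype V] {G : SimpleGraph V} (hG : G.Connected)
    (Q : Finset V → Prop) (huniv : Q Finset.univ)
    (hQ : ∀ U, Q U → EveryComponentDominated (G.induce (↑U : Set V)ᶜ)) :
    copNumber G ≤ (sInf {t | ∃ U, Q U ∧ U.card = t} + 1) / 2 + 1 := by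
  obtain ⟨U, hU, hcard⟩ :=
    Nat.sInf_mem (s := {t | ∃ U, Q U ∧ U.card = t}) ⟨_, Finset.univ, huniv, rfl⟩
  rw [← hcard]
  exact Nat.sInf_le (copsWin_of_everyComponentDominated hG U (hQ U hU))

/-- If `t` is the minimum size of a cluster vertex deletion set (resp. of a
deletion-to-stars set) of a connected graph `G`, then `c(G) ≤ ⌈t/2⌉ + 1`. -/
theorem copNumber_le_cvd_dts
    {V : Type*} [Fintype V] (G : SimpleGraph V) (hG : G.Connected) (t : ℕ) :
    (t = cvdNumber G → copNumber G ≤ (t + 1) / 2 + 1) ∧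
      (t = dtsNumber G → copNumber G ≤ (t + 1) / 2 + 1) := by
  constructor
  · rintro rfl
    exact copNumber_le_of_deletion hG (fun U => IsClusterGraph (G.induce (↑U : Set V)ᶜ))
      (fun x => absurd x.2 (by simp)) fun _ hU => hU.everyComponentDominated
  · rintro rfl
    exact copNumber_le_of_deletion hG (fun U => IsStarForest (G.induce (↑U : Set V)ᶜ))
      (fun x => absurd x.2 (by simp)) fun _ hU => hU.everyComponentDominated
end

section
/- Let G be a connected graph with vertex cover U of size t and independent set I = V(G)\U. If after exhaustively deleting every vertex u ∈ I for which there exists another vertex v ∈ I with N(u) ⊆ N(v), the resulting graph G' satisfies |V(G')| ≤ t + 2^t/√t. -/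
/-!
Every vertex outside the cover `U` has all its neighbours in `U`, so the reduction rule says
exactly that the traces `N(v) ∩ U` of the vertices `v ∉ U` are pairwise distinct and form an
antichain in the power set of `U`. Sperner's theorem bounds their number by `C(t, ⌊t/2⌋)`, and
the elementary estimate `t · C(t, ⌊t/2⌋)² ≤ 4^t` turns this into `2^t / √t`.
-/

open SimpleGraph Finset

namespace Nat

theorem two_mul_add_one_mul_centralBinom_sq_le (n : ℕ) :
    (2 * n + 1) * centralBinom n ^ 2 ≤ 4 ^ (2 * n) := by
  induction n with
  | zero => simp
  | succ n ih =>
    have hrec :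
        ((n + 1) * centralBinom (n + 1)) ^ 2 = 4 * (2 * n + 1) ^ 2 * centralBinom n ^ 2 := by
      rw [succ_mul_centralBinom_succ]; ring
    have hquad : (2 * n + 3) * (2 * n + 1) ≤ 4 * (n + 1) ^ 2 := by nlinarith
    refine Nat.le_of_mul_le_mul_right (c := (n + 1) ^ 2) ?_ (by positivity)
    calc (2 * (n + 1) + 1) * centralBinom (n + 1) ^ 2 * (n + 1) ^ 2
        = 4 * ((2 * n + 3) * (2 * n + 1)) * ((2 * n + 1) * centralBinom n ^ 2) := by
          rw [show (2 * (n + 1) + 1) * centralBinom (n + 1) ^ 2 * (n + 1) ^ 2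
            = (2 * n + 3) * ((n + 1) * centralBinom (n + 1)) ^ 2 by ring, hrec]; ring
      _ ≤ 4 * (4 * (n + 1) ^ 2) * 4 ^ (2 * n) := by gcongr
      _ = 4 ^ (2 * (n + 1)) * (n + 1) ^ 2 := by ring

theorem mul_choose_half_sq_le (t : ℕ) : t * t.choose (t / 2) ^ 2 ≤ 4 ^ t := by
  obtain ⟨m, rfl | rfl⟩ := even_or_odd' t
  · rw [mul_div_cancel_left₀ m two_ne_zero, ← centralBinom_eq_two_mul_choose]
    exact (Nat.mul_le_mul_right _ (le_succ _)).trans (two_mul_add_one_mul_centralBinom_sq_le m)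
  · have hhalf : (2 * m + 1) / 2 = m := by omega
    have hcentral : centralBinom (m + 1) = 2 * (2 * m + 1).choose m := by
      rw [centralBinom_eq_two_mul_choose, show 2 * (m + 1) = 2 * m + 1 + 1 by ring,
        choose_succ_succ, choose_symm_half]; ring
    have key := two_mul_add_one_mul_centralBinom_sq_le (m + 1)
    rw [hcentral] at key
    rw [hhalf]
    refine Nat.le_of_mul_le_mul_left (c := 4) ?_ (by norm_num)
    calc 4 * ((2 * m + 1) * (2 * m + 1).choose m ^ 2)
        ≤ 4 * ((2 * m + 3) * (2 * m + 1).choose m ^ 2) := by gcongr; omega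
      _ = (2 * (m + 1) + 1) * (2 * (2 * m + 1).choose m) ^ 2 := by ring
      _ ≤ 4 ^ (2 * (m + 1)) := key
      _ = 4 * 4 ^ (2 * m + 1) := by ring

theorem choose_half_le_two_pow_div_sqrt {t : ℕ} (ht : 1 ≤ t) :
    (t.choose (t / 2) : ℝ) ≤ 2 ^ t / √t := by
  have hsqrt : (0 : ℝ) < √t := Real.sqrt_pos.2 (by exact_mod_cast ht)
  have hsq : ((t : ℝ) * t.choose (t / 2) ^ 2) ≤ (2 ^ t) ^ 2 := by
    rw [← pow_mul, mul_comm t 2, pow_mul]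
    exact_mod_cast mul_choose_half_sq_le t
  rw [le_div_iff₀ hsqrt, ← Real.sqrt_sq (by positivity : (0 : ℝ) ≤ 2 ^ t),
    ← Real.sqrt_sq (Nat.cast_nonneg (t.choose (t / 2))), ← Real.sqrt_mul (by positivity)]
  exact Real.sqrt_le_sqrt (by linarith)

end Nat

theorem card_le_choose_half_of_forall_not_subset {α β : Type*} [Fintype β] {s : Finset α}
    (f : α → Finset β) (hf : ∀ a ∈ s, ∀ b ∈ s, a ≠ b → ¬ f a ⊆ f b) :
    #s ≤ (Fintype.card β).choose (Fintype.card β / 2) := by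
  classical
  have hinj : Set.InjOn f s := fun a ha b hb hab =>
    by_contra fun hne => hf a ha b hb hne hab.subset
  have hanti : IsAntichain (· ⊆ ·) (SetLike.coe (s.image f)) := by
    rintro _ hfa _ hfb hne hsub
    obtain ⟨a, ha, rfl⟩ := mem_image.1 hfa
    obtain ⟨b, hb, rfl⟩ := mem_image.1 hfb
    exact hf a ha b hb (fun h => hne (h ▸ rfl)) hsub
  exact card_image_of_injOn hinj ▸ hanti.sperner

theorem SimpleGraph.neighborSet_subset_of_forall_mem_cover {V : Type*} {G : SimpleGraph V}
    {U : Set V} (hVC : ∀ ⦃x y : V⦄, G.Adj x y → x ∈ U ∨ y ∈ U) {u v : V} (hu : u ∉ U)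
    (h : ∀ x ∈ U, G.Adj u x → G.Adj v x) : G.neighborSet u ⊆ G.neighborSet v :=
  fun x hx => h x ((hVC hx).resolve_left hu) hx

theorem reduced_graph_size_le_general
    {V : Type*} [Fintype V] (G : SimpleGraph V)
    (U : Finset V) (t : ℕ) (htU : U.card = t) (ht : 1 ≤ t)
    (hVC : ∀ ⦃x y : V⦄, G.Adj x y → x ∈ U ∨ y ∈ U)
    (hred : ∀ u v : V, u ∉ U → v ∉ U → u ≠ v →
      ¬ (G.neighborSet u ⊆ G.neighborSet v)) :
    (Fintype.card V : ℝ) ≤ t + 2 ^ t / Real.sqrt t := by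
  classical
  have hsperner : #Uᶜ ≤ t.choose (t / 2) := by
    have := card_le_choose_half_of_forall_not_subset (s := Uᶜ)
      (fun v => univ.filter fun x : U => G.Adj v x) fun u hu v hv hne hsub =>
        hred u v (mem_compl.1 hu) (mem_compl.1 hv) hne <|
          neighborSet_subset_of_forall_mem_cover hVC (mem_compl.1 hu) fun x hx hux => by
            simpa using hsub (mem_filter.2 ⟨mem_univ ⟨x, hx⟩, hux⟩)
    rwa [Fintype.card_coe, htU] at this
  have hcard : Fintype.card V = t + #Uᶜ := by rw [← htU, card_add_card_compl]
  rw [hcard, Nat.cast_add]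
  gcongr
  exact (Nat.cast_le.2 hsperner).trans (Nat.choose_half_le_two_pow_div_sqrt ht)

/-- Kernel size bound: if `U` is a vertex cover of a connected graph `G` of size `t ≥ 1`
and no vertex of the independent set `I = V(G) \ U` has its neighbourhood contained in the
neighbourhood of another vertex of `I` (i.e. the reduction rule has been applied
exhaustively), then `|V(G)| ≤ t + 2^t / √t`. -/
theorem reduced_graph_size_le
    {V : Type*} [Fintype V] (G : SimpleGraph V) (hG : G.Connected)
    (U : Finset V) (t : ℕ) (htU : U.card = t) (ht : 1 ≤ t)
    (hVC : ∀ ⦃x y : V⦄, G.Adj x y → x ∈ U ∨ y ∈ U)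
    (hred : ∀ u v : V, u ∉ U → v ∉ U → u ≠ v →
      ¬ (G.neighborSet u ⊆ G.neighborSet v)) :
    (Fintype.card V : ℝ) ≤ t + 2 ^ t / Real.sqrt t :=
  reduced_graph_size_le_general G U t htU ht hVC hred
end
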